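/- arXiv:1004.0840 — 4 statements merged into one kernel-verified Lean document; each statement's English description precedes it below -/
import Mathlib

section
/- With A = A_{H(4,3)}, g = (1,2,1,-2,-3,0,1) lies in ker A, and g⁺ = (1,2,1,0,0,0,1) satisfies g⁺ = (1/2)·u1 + (1/2)·u2 where u1=(2,0,2,0,0,0,1) and u2=(0,4,0,0,0,0,1), with A·u1 = A·u2 = A·g⁺; hence g⁺ is not a vertex of conv{u ∈ ℤ^7_{≥0} : A·u = A·g⁺}. -/
theorem midpoint_notMem_extremePoints_convexHull {𝕜 E : Type*} [Field 𝕜] [LinearOrder 𝕜]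
    [IsStrictOrderedRing 𝕜] [AddCommGroup E] [Module 𝕜 E] {S : Set E} {x y : E}
    (hx : x ∈ S) (hy : y ∈ S) (hxy : x ≠ y) :
    midpoint 𝕜 x y ∉ Set.extremePoints 𝕜 (convexHull 𝕜 S) := fun h =>
  hxy <| (left_eq_midpoint_iff 𝕜).1 <|
    h.2 (subset_convexHull 𝕜 S hx) (subset_convexHull 𝕜 S hy) (midpoint_mem_openSegment x y)

theorem stmt_7 :
    let A : Matrix (Fin 3) (Fin 7) ℤ :=
      !![1,1,1,1,1,1,1; 1,2,3,4,0,0,0; 0,0,0,0,1,2,3]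
    let g : Fin 7 → ℤ := ![1,2,1,-2,-3,0,1]
    let gp : Fin 7 → ℤ := ![1,2,1,0,0,0,1]
    let u1 : Fin 7 → ℤ := ![2,0,2,0,0,0,1]
    let u2 : Fin 7 → ℤ := ![0,4,0,0,0,0,1]
    A.mulVec g = 0 ∧
    A.mulVec u1 = A.mulVec gp ∧ A.mulVec u2 = A.mulVec gp ∧
    (∀ i, (gp i : ℝ) = (1/2) * (u1 i : ℝ) + (1/2) * (u2 i : ℝ)) ∧
    (fun i => (gp i : ℝ)) ∉
      Set.extremePoints ℝ (convexHull ℝ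
        {x : Fin 7 → ℝ | ∃ w : Fin 7 → ℤ, (∀ i, 0 ≤ w i) ∧
          A.mulVec w = A.mulVec gp ∧ x = fun i => (w i : ℝ)}) := by
  intro A g gp u1 u2
  have hAu1 : A.mulVec u1 = A.mulVec gp := by decide
  have hAu2 : A.mulVec u2 = A.mulVec gp := by decide
  have hmid : ∀ i, (gp i : ℝ) = (1/2) * (u1 i : ℝ) + (1/2) * (u2 i : ℝ) := by
    intro i
    fin_cases i <;> norm_num [gp, u1, u2]
  refine ⟨by decide, hAu1, hAu2, hmid, ?_⟩
  have hgp : (fun i => (gp i : ℝ)) =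
      midpoint ℝ (fun i => (u1 i : ℝ)) (fun i => (u2 i : ℝ)) := by
    ext i
    rw [hmid i, midpoint_eq_smul_add]
    simp only [Pi.smul_apply, Pi.add_apply, smul_eq_mul, invOf_eq_inv]
    ring
  rw [hgp]
  refine midpoint_notMem_extremePoints_convexHull
    ⟨u1, by decide, hAu1, rfl⟩ ⟨u2, by decide, hAu2, rfl⟩ fun h => ?_
  simpa [u1, u2] using congrFun h 0
end

section
/- Let A ∈ ℤ^{d×n}, σ ⊆ {1,…,n}, u ∈ ℤ^n with A·u = 0 and u_i = 0 for i ∉ σ. Then the fiber polytope conv{v ∈ ℤ^σ_{≥0} : A_σ·v = A_σ·u_σ⁺}, embedded into ℝ^n by extending by zero, is a face of conv{v ∈ ℤ^n_{≥0} : A·v = A·u⁺}; in particular the segment [u⁺, u⁻] is an edge of the former polytope if and only if it is an edge of the latter. -/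
/-!
The functional `ℓ x = ∑_{i ∉ σ} xᵢ` is nonnegative on the fiber of `A`, and a nonnegative integer
point of that fiber lies in the fiber of `A_σ` exactly when `ℓ` vanishes on it. A nonnegative
functional cuts a face out of a convex hull, and the points of `conv S` on which it vanishes form
the convex hull of its zeros in `S`; so the fiber polytope of `A_σ` is the face `{ℓ = 0}` of the
fiber polytope of `A`. Both `u⁺` and `u⁻` lie in the smaller fiber since `A u⁺ - A u⁻ = A u = 0`,
and a subset of a face is a face of the face iff it is a face of the whole polytope.
-/

open Finset

section NonnegFunctional

variable {𝕜 E : Type*} [Field 𝕜] [LinearOrder 𝕜] [IsStrictOrderedRing 𝕜] [AddCommGroup E]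
  [Module 𝕜 E] (l : E →ₗ[𝕜] 𝕜)

theorem isExtreme_inter_ker_of_nonneg {C : Set E} (hC : ∀ x ∈ C, 0 ≤ l x) :
    IsExtreme 𝕜 C (C ∩ {x | l x = 0}) := by
  refine ⟨Set.inter_subset_left, fun x hx y hy z hz hzxy => ⟨hx, ?_⟩⟩
  obtain ⟨a, b, ha, hb, -, rfl⟩ := hzxy
  have hsum : a * l x + b * l y = 0 := by simpa using hz.2
  have hax := mul_nonneg ha.le (hC x hx)
  have hby := mul_nonneg hb.le (hC y hy)
  exact (mul_eq_zero.mp ((add_eq_zero_iff_of_nonneg hax hby).mp hsum).1).resolve_left ha.ne'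

theorem convexHull_nonneg_of_nonneg {S : Set E} (hS : ∀ x ∈ S, 0 ≤ l x) :
    ∀ x ∈ convexHull 𝕜 S, 0 ≤ l x :=
  convexHull_min hS (convex_halfSpace_ge l.isLinear 0)

theorem convexHull_inter_ker_of_nonneg {S : Set E} (hS : ∀ x ∈ S, 0 ≤ l x) :
    convexHull 𝕜 S ∩ {x | l x = 0} = convexHull 𝕜 (S ∩ {x | l x = 0}) := by
  refine subset_antisymm ?_ fun x hx => ⟨convexHull_mono Set.inter_subset_left hx, ?_⟩
  · rintro x ⟨hxS, hx0⟩
    rw [_root_.convexHull_eq] at hxS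
    obtain ⟨ι, t, w, z, hw0, hw1, hz, rfl⟩ := hxS
    have hterms : ∑ i ∈ t, w i * l (z i) = 0 := by
      simpa [Finset.centerMass, hw1, map_sum] using hx0
    have hzero : ∀ i ∈ t, w i * l (z i) = 0 :=
      (sum_eq_zero_iff_of_nonneg fun i hi => mul_nonneg (hw0 i hi) (hS _ (hz i hi))).mp hterms
    classical
    rw [← Finset.centerMass_filter_ne_zero]
    refine Finset.centerMass_mem_convexHull _ (fun i hi => hw0 i (mem_filter.mp hi).1)
      (by rw [sum_filter_ne_zero, hw1]; exact one_pos) fun i hi => ?_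
    obtain ⟨hit, hwi⟩ := mem_filter.mp hi
    exact ⟨hz i hit, (mul_eq_zero.mp (hzero i hit)).resolve_left hwi⟩
  · exact convexHull_min Set.inter_subset_right (convex_hyperplane l.isLinear 0) hx

theorem isExtreme_convexHull_inter_ker_of_nonneg {S : Set E} (hS : ∀ x ∈ S, 0 ≤ l x) :
    IsExtreme 𝕜 (convexHull 𝕜 S) (convexHull 𝕜 (S ∩ {x | l x = 0})) :=
  convexHull_inter_ker_of_nonneg l hS ▸
    isExtreme_inter_ker_of_nonneg l (convexHull_nonneg_of_nonneg l hS)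

end NonnegFunctional

theorem IsExtreme.isExtreme_iff_of_subset {𝕜 E : Type*} [Semiring 𝕜] [PartialOrder 𝕜]
    [AddCommMonoid E] [SMul 𝕜 E] {A B C : Set E} (hAB : IsExtreme 𝕜 A B) (hCB : C ⊆ B) :
    IsExtreme 𝕜 B C ↔ IsExtreme 𝕜 A C :=
  ⟨hAB.trans, fun hAC => hAC.mono hAB.subset hCB⟩

section Fiber

variable {d n : ℕ} (A : Matrix (Fin d) (Fin n) ℤ) (σ : Finset (Fin n)) (b : Fin d → ℤ)

theorem sum_compl_nonneg_of_mem_fiber :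
    ∀ x ∈ {x : Fin n → ℝ | ∃ w : Fin n → ℤ, (∀ i, 0 ≤ w i) ∧
        A.mulVec w = b ∧ x = fun i => (w i : ℝ)},
      0 ≤ (∑ i ∈ σᶜ, LinearMap.proj i : (Fin n → ℝ) →ₗ[ℝ] ℝ) x := by
  rintro _ ⟨w, hw, -, rfl⟩
  simpa using sum_nonneg fun i (_ : i ∈ σᶜ) => (by exact_mod_cast hw i : (0 : ℝ) ≤ w i)

theorem supported_fiber_eq_fiber_inter :
    {x : Fin n → ℝ | ∃ w : Fin n → ℤ, (∀ i, 0 ≤ w i) ∧ (∀ i ∉ σ, w i = 0) ∧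
        A.mulVec w = b ∧ x = fun i => (w i : ℝ)} =
      {x : Fin n → ℝ | ∃ w : Fin n → ℤ, (∀ i, 0 ≤ w i) ∧
        A.mulVec w = b ∧ x = fun i => (w i : ℝ)} ∩
        {x | (∑ i ∈ σᶜ, LinearMap.proj i : (Fin n → ℝ) →ₗ[ℝ] ℝ) x = 0} := by
  have hsum {w : Fin n → ℤ} (hw : ∀ i, 0 ≤ w i) :
      ∑ i ∈ σᶜ, (w i : ℝ) = 0 ↔ ∀ i ∉ σ, w i = 0 := by
    rw [sum_eq_zero_iff_of_nonneg fun i _ => by exact_mod_cast hw i]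
    simp
  ext x
  constructor
  · rintro ⟨w, hw, hwσ, hAw, rfl⟩
    exact ⟨⟨w, hw, hAw, rfl⟩, by simpa using (hsum hw).mpr hwσ⟩
  · rintro ⟨⟨w, hw, hAw, rfl⟩, hx⟩
    exact ⟨w, hw, (hsum hw).mp (by simpa using hx), hAw, rfl⟩

end Fiber

theorem stmt_10 {d n : ℕ} (A : Matrix (Fin d) (Fin n) ℤ) (σ : Finset (Fin n))
    (u : Fin n → ℤ) (hker : A.mulVec u = 0) (hsupp : ∀ i ∉ σ, u i = 0) :
    -- the positive and negative parts of u, as real vectors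
    let up : Fin n → ℤ := fun i => max (u i) 0
    let um : Fin n → ℤ := fun i => max (-(u i)) 0
    -- the fiber polytope of A_σ (embedded into ℝ^n by extending by zero)
    let P : Set (Fin n → ℝ) := convexHull ℝ
      {x : Fin n → ℝ | ∃ w : Fin n → ℤ, (∀ i, 0 ≤ w i) ∧ (∀ i ∉ σ, w i = 0) ∧
        A.mulVec w = A.mulVec up ∧ x = fun i => (w i : ℝ)}
    -- the fiber polytope of A
    let Q : Set (Fin n → ℝ) := convexHull ℝ
      {x : Fin n → ℝ | ∃ w : Fin n → ℤ, (∀ i, 0 ≤ w i) ∧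
        A.mulVec w = A.mulVec up ∧ x = fun i => (w i : ℝ)}
    IsExtreme ℝ Q P ∧
    (IsExtreme ℝ P (segment ℝ (fun i => (up i : ℝ)) (fun i => (um i : ℝ))) ↔
     IsExtreme ℝ Q (segment ℝ (fun i => (up i : ℝ)) (fun i => (um i : ℝ)))) := by
  intro up um P Q
  have hface : IsExtreme ℝ Q P := by
    rw [show P = _ from congrArg (convexHull ℝ) (supported_fiber_eq_fiber_inter A σ _)]
    exact isExtreme_convexHull_inter_ker_of_nonneg _ (sum_compl_nonneg_of_mem_fiber A σ _)
  have hmem (v : Fin n → ℤ) (hv : ∀ i, 0 ≤ v i) (hvσ : ∀ i ∉ σ, v i = 0)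
      (hAv : A.mulVec v = A.mulVec up) : (fun i => (v i : ℝ)) ∈ P :=
    subset_convexHull ℝ _ ⟨v, hv, hvσ, hAv, rfl⟩
  have hAum : A.mulVec um = A.mulVec up := by
    have hu : up - um = u := by funext i; simp only [Pi.sub_apply, up, um]; omega
    rw [eq_comm, ← sub_eq_zero, ← Matrix.mulVec_sub, hu, hker]
  refine ⟨hface, hface.isExtreme_iff_of_subset ((convex_convexHull ℝ _).segment_subset ?_ ?_)⟩
  · exact hmem up (fun i => le_max_right _ _) (fun i hi => by simp [up, hsupp i hi]) rfl
  · exact hmem um (fun i => le_max_right _ _) (fun i hi => by simp [um, hsupp i hi]) hAum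
end

section
/- Every element g of the Graver basis of the 1×m matrix D = (1,2,…,m) satisfies ‖g‖₁ ≤ 2m − 1, and this bound is attained for m ≥ 2 (e.g., by vectors encoding primitive homogeneous partition identities of maximal length). -/
/-!
Encode `g` by the multiset of its signed weights `sign(g i) * w i`, each taken `|g i|` times:
it sums to zero and, by primitivity, no nonempty proper sub-multiset does. Adding a nonnegative
element while the running sum is `≤ 0` and a negative one otherwise orders it so that all partial
sums lie in `(-b, a]`, where `a` bounds the positive and `b` the negative signed weights. The
partial sums of the proper prefixes are distinct, since the block between two equal ones would be a
proper zero-sum sub-multiset; hence `‖g‖₁ ≤ a + b`. For the weights `1, …, m` the weight `m` cannot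
occur with both signs, so up to replacing `g` by `-g` we may take `a = m - 1` and `b = m`. The
bound is attained by `m e_{m-1} - (m - 1) e_m`.
-/

/-- `u` is a Graver basis element of the matrix `A`. -/
def IsGraver {d n : ℕ} (A : Matrix (Fin d) (Fin n) ℤ) (u : Fin n → ℤ) : Prop :=
  u ≠ 0 ∧ A.mulVec u = 0 ∧
    ∀ v : Fin n → ℤ, v ≠ 0 → v ≠ u → A.mulVec v = 0 →
      ¬ ((∀ i, max (v i) 0 ≤ max (u i) 0) ∧ (∀ i, max (-(v i)) 0 ≤ max (-(u i)) 0))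

open Matrix

namespace List

variable {α : Type*} (f : α → ℤ)

theorem injOn_prefix_sums (l : List α)
    (hl : ∀ l', l' <:+: l → l' ≠ [] → l'.length < l.length → (l'.map f).sum ≠ 0) :
    Set.InjOn (fun k => ((l.take k).map f).sum) (Set.Iio l.length) := by
  suffices ∀ i j, i < j → j < l.length → ((l.take i).map f).sum ≠ ((l.take j).map f).sum by
    intro i hi j hj hij
    by_contra hne
    rcases Nat.lt_or_gt_of_ne hne with h | h
    · exact this i j h hj hij
    · exact this j i h hi hij.symm
  intro i j hij hj heq
  have hsplit := sum_take_add_sum_drop ((l.take j).map f) i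
  rw [← map_drop, ← map_take, take_take, min_eq_left hij.le, heq, add_eq_left] at hsplit
  refine hl ((l.take j).drop i) ((drop_suffix _ _).isInfix.trans (take_prefix _ _).isInfix)
    ?_ ?_ hsplit
  · rw [ne_eq, ← length_eq_zero_iff, length_drop, length_take]; omega
  · rw [length_drop, length_take]; omega

end List

namespace Multiset

theorem sum_map_eq_sum_count {ι M : Type*} [Fintype ι] [DecidableEq ι] [AddCommMonoid M]
    (s : Multiset ι) (f : ι → M) : (s.map f).sum = ∑ i, s.count i • f i := by
  rw [Finset.sum_multiset_map_count]
  exact Finset.sum_subset (Finset.subset_univ _) fun i _ hi => by simp_all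

variable {α : Type*} (f : α → ℤ) {a b : ℤ}

theorem exists_list_prefix_sums_mem_Ioc (M : Multiset α) (hM : ∀ x ∈ M, -b ≤ f x ∧ f x ≤ a)
    {s : ℤ} (hs : s ∈ Set.Ioc (-b) a) (hsum : s + (M.map f).sum = 0) :
    ∃ l : List α, (l : Multiset α) = M ∧
      ∀ k < l.length, s + ((l.take k).map f).sum ∈ Set.Ioc (-b) a := by
  classical
  induction M using Multiset.strongInductionOn generalizing s with
  | ih M ih =>
  rcases eq_or_ne M 0 with rfl | hM0
  · exact ⟨[], rfl, by simp⟩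
  -- a step of sign opposite to that of the running sum keeps it in `(-b, a]`
  obtain ⟨x, hxM, hx⟩ : ∃ x ∈ M, s + f x ∈ Set.Ioc (-b) a := by
    rcases le_or_gt s 0 with hs0 | hs0
    · obtain ⟨x, hxM, hx⟩ : ∃ x ∈ M, 0 ≤ f x := by
        by_contra! h
        have := sum_lt_sum_of_nonempty (g := fun _ => (0 : ℤ)) hM0 h
        simp only [map_const', sum_replicate, nsmul_zero] at this
        omega
      exact ⟨x, hxM, by grind⟩
    · obtain ⟨x, hxM, hx⟩ : ∃ x ∈ M, f x < 0 := by
        by_contra! h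
        have := sum_map_le_sum_map (fun _ => (0 : ℤ)) f h
        simp only [map_const', sum_replicate, nsmul_zero] at this
        omega
      exact ⟨x, hxM, by grind⟩
  rw [← cons_erase hxM, map_cons, sum_cons, ← add_assoc] at hsum
  obtain ⟨l, hl, hlk⟩ := ih (M.erase x) (erase_lt.2 hxM)
    (fun y hy => hM y (mem_of_mem_erase hy)) hx hsum
  refine ⟨x :: l, by rw [← cons_coe, hl, cons_erase hxM], ?_⟩
  rintro (_ | k) hk
  · simpa using hs
  · simpa [add_assoc] using hlk k (by simpa using hk)

theorem card_le_add_of_sum_map_eq_zero (M : Multiset α) (ha : 0 ≤ a) (hb : 0 < b)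
    (hM : ∀ x ∈ M, -b ≤ f x ∧ f x ≤ a) (hsum : (M.map f).sum = 0)
    (hprim : ∀ M' < M, M' ≠ 0 → (M'.map f).sum ≠ 0) : (card M : ℤ) ≤ a + b := by
  obtain ⟨l, rfl, hl⟩ := exists_list_prefix_sums_mem_Ioc f M hM (s := 0) ⟨by omega, ha⟩
    (by simpa using hsum)
  have hinj := l.injOn_prefix_sums f fun l' hl' hne hlen => by
    simpa using hprim l' (lt_of_le_of_ne (coe_le.2 hl'.sublist.subperm)
      fun h => hlen.ne (by simpa using congrArg card h)) (by simpa using hne)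
  have := Finset.card_le_card_of_injOn (s := Finset.range l.length) (t := Finset.Ioc (-b) a) _
    (fun k hk => by simpa using hl k (by simpa using hk)) (by simpa using hinj)
  simp only [Finset.card_range, Int.card_Ioc] at this
  simp only [coe_card]
  omega

end Multiset

theorem Int.max_sign_mul_le_max_of_le_natAbs {x : ℤ} {c : ℕ} (hc : c ≤ x.natAbs) :
    max (x.sign * c) 0 ≤ max x 0 ∧ max (-(x.sign * c)) 0 ≤ max (-x) 0 := by
  rcases lt_trichotomy x 0 with h | rfl | h
  · rw [Int.sign_eq_neg_one_of_neg h]; omega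
  · simp_all
  · rw [Int.sign_eq_one_of_pos h]; omega

theorem Int.natAbs_sign_mul_of_le {x : ℤ} {c : ℕ} (hc : c ≤ x.natAbs) :
    (x.sign * c).natAbs = c := by
  rcases eq_or_ne x 0 with rfl | h
  · simp_all
  · simp [Int.natAbs_mul, Int.natAbs_sign_of_ne_zero h]

theorem Matrix.mulVec_eq_zero_iff_of_fin_one {ι R : Type*} [Fintype ι] [NonUnitalNonAssocSemiring R]
    {D : Matrix (Fin 1) ι R} {v : ι → R} : D *ᵥ v = 0 ↔ D 0 ⬝ᵥ v = 0 := by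
  simp [funext_iff, Fin.forall_fin_one, mulVec]

section
variable {ι : Type*} [Fintype ι]

def absMultiset (g : ι → ℤ) : Multiset ι := ∑ i, Multiset.replicate (g i).natAbs i

theorem card_absMultiset (g : ι → ℤ) : ((absMultiset g).card : ℤ) = ∑ i, |g i| := by
  simp [absMultiset, Multiset.card_sum]

variable [DecidableEq ι]

theorem count_absMultiset (g : ι → ℤ) (i : ι) : (absMultiset g).count i = (g i).natAbs := by
  simp [absMultiset, Multiset.count_sum', Multiset.count_replicate]

def signedCount (g : ι → ℤ) (s : Multiset ι) (i : ι) : ℤ := (g i).sign * s.count i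

theorem signedCount_absMultiset (g : ι → ℤ) : signedCount g (absMultiset g) = g := by
  ext i; simp [signedCount, count_absMultiset, Int.sign_mul_abs]

theorem sum_map_sign_mul_eq_dotProduct (g w : ι → ℤ) (s : Multiset ι) :
    (s.map fun i => (g i).sign * w i).sum = w ⬝ᵥ signedCount g s := by
  simp only [Multiset.sum_map_eq_sum_count, dotProduct, signedCount, nsmul_eq_mul]
  exact Finset.sum_congr rfl fun i _ => by ring

variable {g : ι → ℤ} {s : Multiset ι}

theorem count_le_natAbs (hs : s ≤ absMultiset g) (i : ι) : s.count i ≤ (g i).natAbs :=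
  count_absMultiset g i ▸ Multiset.count_le_of_le i hs

theorem natAbs_signedCount (hs : s ≤ absMultiset g) (i : ι) :
    (signedCount g s i).natAbs = s.count i :=
  Int.natAbs_sign_mul_of_le (count_le_natAbs hs i)

theorem signedCount_ne_zero (hs : s ≤ absMultiset g) (hs0 : s ≠ 0) : signedCount g s ≠ 0 := by
  obtain ⟨i, hi⟩ := Multiset.exists_mem_of_ne_zero hs0
  intro h
  have := natAbs_signedCount hs i
  simp only [h, Pi.zero_apply, Int.natAbs_zero] at this
  exact (Multiset.count_pos.2 hi).ne this

theorem signedCount_ne (hs : s < absMultiset g) : signedCount g s ≠ g := by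
  intro h
  refine hs.ne (Multiset.ext.2 fun i => ?_)
  rw [← natAbs_signedCount hs.le, h, count_absMultiset]

end

theorem IsGraver.neg {d n : ℕ} {A : Matrix (Fin d) (Fin n) ℤ} {u : Fin n → ℤ}
    (hu : IsGraver A u) : IsGraver A (-u) := by
  obtain ⟨hu0, hker, hprim⟩ := hu
  refine ⟨neg_ne_zero.2 hu0, by rw [mulVec_neg, hker, neg_zero], fun v hv0 hvu hv ⟨h1, h2⟩ => ?_⟩
  refine hprim (-v) (neg_ne_zero.2 hv0) (fun h => hvu (by rw [← h, neg_neg]))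
    (by rw [mulVec_neg, hv, neg_zero]) ⟨fun i => ?_, fun i => ?_⟩
  · simpa using h2 i
  · simpa using h1 i

theorem IsGraver.sum_abs_le_add {n : ℕ} {D : Matrix (Fin 1) (Fin n) ℤ} {g : Fin n → ℤ}
    (hg : IsGraver D g) {a b : ℤ} (ha : 0 ≤ a) (hb : 0 < b)
    (hstep : ∀ i, -b ≤ (g i).sign * D 0 i ∧ (g i).sign * D 0 i ≤ a) :
    ∑ i, |g i| ≤ a + b := by
  obtain ⟨-, hker, hprim⟩ := hg
  rw [← card_absMultiset]
  refine (absMultiset g).card_le_add_of_sum_map_eq_zero _ ha hb (fun i _ => hstep i) ?_ ?_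
  · rw [sum_map_sign_mul_eq_dotProduct, signedCount_absMultiset]
    exact mulVec_eq_zero_iff_of_fin_one.1 hker
  · intro s hs hs0 hsum
    rw [sum_map_sign_mul_eq_dotProduct] at hsum
    exact hprim _ (signedCount_ne_zero hs.le hs0) (signedCount_ne hs)
      (mulVec_eq_zero_iff_of_fin_one.2 hsum)
      ⟨fun i => (Int.max_sign_mul_le_max_of_le_natAbs (count_le_natAbs hs.le i)).1,
        fun i => (Int.max_sign_mul_le_max_of_le_natAbs (count_le_natAbs hs.le i)).2⟩

theorem isGraver_single_sub_single {n : ℕ} {D : Matrix (Fin 1) (Fin n) ℤ} {i j : Fin n}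
    (hij : i ≠ j) (hj : 0 < D 0 j) (hcop : IsCoprime (D 0 i) (D 0 j)) :
    IsGraver D (Pi.single i (D 0 j) - Pi.single j (D 0 i)) := by
  set p := D 0 i
  set q := D 0 j
  set g : Fin n → ℤ := Pi.single i q - Pi.single j p
  have hgi : g i = q := by simp [g, hij]
  have hgj : g j = -p := by simp [g, hij.symm]
  have hgk : ∀ k, k ≠ i → k ≠ j → g k = 0 := fun k hki hkj => by simp [g, hki, hkj]
  have hdot : ∀ v : Fin n → ℤ, (∀ k, k ≠ i → k ≠ j → v k = 0) → D 0 ⬝ᵥ v = p * v i + q * v j :=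
    fun v hv => Fintype.sum_eq_add i j hij fun k hk => by simp [hv k hk.1 hk.2]
  refine ⟨fun h => hj.ne' (hgi ▸ congrFun h i), mulVec_eq_zero_iff_of_fin_one.2 ?_, ?_⟩
  · rw [hdot g hgk, hgi, hgj]; ring
  intro v hv0 hvg hv ⟨h1, h2⟩
  have hvk : ∀ k, k ≠ i → k ≠ j → v k = 0 := fun k hki hkj => by
    have := h1 k; have := h2 k; rw [hgk k hki hkj] at *; omega
  have hvi : 0 ≤ v i ∧ v i ≤ q := by have := h1 i; have := h2 i; rw [hgi] at *; omega
  have hsum : p * v i + q * v j = 0 := by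
    rw [← hdot v hvk]; exact mulVec_eq_zero_iff_of_fin_one.1 hv
  -- by coprimality `v` is an integer multiple `c • g`, and `v ⊑ g` leaves only `c ∈ {0, 1}`
  obtain ⟨c, hc⟩ : q ∣ v i := hcop.symm.dvd_of_dvd_mul_left ⟨-v j, by linarith⟩
  have hvj : v j = -(p * c) := by
    have : q * (v j + p * c) = 0 := by rw [hc] at hsum; linarith
    linarith [(mul_eq_zero.1 this).resolve_left hj.ne']
  have hvc : v = c • g := by
    ext k
    rcases eq_or_ne k i with rfl | hki
    · simp [hgi, hc, mul_comm]
    rcases eq_or_ne k j with rfl | hkj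
    · simp [hgj, hvj, mul_comm]
    · simp [hgk k hki hkj, hvk k hki hkj]
  obtain rfl | rfl : c = 0 ∨ c = 1 := by
    have : 0 ≤ c := by nlinarith
    have : c ≤ 1 := by nlinarith
    omega
  · exact hv0 (by simp [hvc])
  · exact hvg (by simp [hvc])

theorem sum_abs_single_sub_single {n : ℕ} {i j : Fin n} (hij : i ≠ j) (p q : ℤ) :
    ∑ k, |(Pi.single i q - Pi.single j p : Fin n → ℤ) k| = |q| + |p| := by
  rw [Fintype.sum_eq_add i j hij fun k hk => by simp [hk.1, hk.2]]
  simp [hij, hij.symm]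

theorem sum_abs_le_of_apply_nonpos {m : ℕ} {D : Matrix (Fin 1) (Fin m) ℤ}
    (hD : ∀ r j, D r j = (j : ℤ) + 1) {g : Fin m → ℤ} (hg : IsGraver D g) (k : Fin m)
    (hk : (k : ℕ) + 1 = m) (hgk : g k ≤ 0) : ∑ i, |g i| ≤ 2 * (m : ℤ) - 1 := by
  have := hg.sum_abs_le_add (a := m - 1) (b := m) (by omega) (by omega) fun i => ?_
  · linarith
  have hi := i.isLt
  rw [hD]
  rcases lt_trichotomy (g i) 0 with h | h | h
  · rw [Int.sign_eq_neg_one_of_neg h]; omega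
  · rw [h, Int.sign_zero]; omega
  · have : (i : ℕ) ≠ k := fun hik => by rw [Fin.ext hik] at h; omega
    rw [Int.sign_eq_one_of_pos h]; omega

theorem stmt_12 {m : ℕ} (D : Matrix (Fin 1) (Fin m) ℤ)
    (hD : ∀ r j, D r j = (j : ℤ) + 1) :
    (∀ g : Fin m → ℤ, IsGraver D g → ∑ i, |g i| ≤ 2 * (m : ℤ) - 1) ∧
    (2 ≤ m → ∃ g : Fin m → ℤ, IsGraver D g ∧ ∑ i, |g i| = 2 * (m : ℤ) - 1) := by
  refine ⟨fun g hg => ?_, fun hm => ?_⟩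
  · obtain ⟨i, -⟩ := Function.ne_iff.1 hg.1
    have hm : 0 < m := i.pos
    let k : Fin m := ⟨m - 1, by omega⟩
    rcases le_or_gt (g k) 0 with hgk | hgk
    · exact sum_abs_le_of_apply_nonpos hD hg k (Nat.sub_add_cancel hm) hgk
    · simpa using sum_abs_le_of_apply_nonpos hD hg.neg k (Nat.sub_add_cancel hm)
        (by rw [Pi.neg_apply]; omega)
  · let i : Fin m := ⟨m - 2, by omega⟩
    let j : Fin m := ⟨m - 1, by omega⟩
    have hij : i ≠ j := Fin.ne_of_val_ne (show m - 2 ≠ m - 1 by omega)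
    have hDi : D 0 i = m - 1 := by rw [hD]; show ((m - 2 : ℕ) : ℤ) + 1 = m - 1; omega
    have hDj : D 0 j = m := by rw [hD]; show ((m - 1 : ℕ) : ℤ) + 1 = m; omega
    refine ⟨_, isGraver_single_sub_single (D := D) hij (by omega) ?_, ?_⟩
    · rw [hDi, hDj]; exact ⟨-1, 1, by ring⟩
    · rw [sum_abs_single_sub_single hij, hDi, hDj, abs_of_nonneg (by omega),
        abs_of_nonneg (by omega)]
      ring
end

section
/- The vector g = (1,-1,1,-1,-1,0,1) gives a Graver basis element of A_{S(6)} = [[1,2,3,4,5,6,7],[1,1,1,1,1,1,1]] that is not in the universal Gröbner basis: g is primitive in ker A_{S(6)}, but the segment [g⁺, g⁻] is not an edge of the fiber polytope conv{u ∈ ℤ^7_{≥0} : A·u = A·g⁺}. -/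
open Matrix

theorem Int.eq_zero_or_eq_of_max_le {x c : ℤ} (hc : |c| ≤ 1) (hp : max x 0 ≤ max c 0)
    (hn : max (-x) 0 ≤ max (-c) 0) : x = 0 ∨ x = c := by
  rw [abs_le] at hc
  omega

theorem exists_eq_piecewise_of_max_le {ι : Type*} [DecidableEq ι] [Fintype ι] {u v : ι → ℤ}
    (hu : ∀ i, |u i| ≤ 1) (hp : ∀ i, max (v i) 0 ≤ max (u i) 0)
    (hn : ∀ i, max (-v i) 0 ≤ max (-u i) 0) : ∃ s : Finset ι, v = s.piecewise u 0 := by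
  refine ⟨Finset.univ.filter (v · ≠ 0), funext fun i => ?_⟩
  by_cases h0 : v i = 0
  · simp [h0]
  · rw [Finset.piecewise_eq_of_mem _ _ _ (by simpa using h0)]
    exact (Int.eq_zero_or_eq_of_max_le (hu i) (hp i) (hn i)).resolve_left h0

theorem isGraver_of_abs_le_one {d n : ℕ} {A : Matrix (Fin d) (Fin n) ℤ} {u : Fin n → ℤ}
    (hu : ∀ i, |u i| ≤ 1) (hu0 : u ≠ 0) (hAu : A *ᵥ u = 0)
    (hprim : ∀ s : Finset (Fin n), A *ᵥ s.piecewise u 0 = 0 →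
      s.piecewise u 0 = 0 ∨ s.piecewise u 0 = u) :
    IsGraver A u := by
  refine ⟨hu0, hAu, fun v hv0 hvu hAv ⟨hp, hn⟩ => ?_⟩
  obtain ⟨s, rfl⟩ := exists_eq_piecewise_of_max_le hu hp hn
  exact (hprim s hAv).elim hv0 hvu

theorem notMem_segment_of_linearMap_eq {𝕜 E F : Type*} [Semiring 𝕜] [PartialOrder 𝕜]
    [IsOrderedRing 𝕜] [AddCommMonoid E] [Module 𝕜 E] [AddCommMonoid F] [PartialOrder F]
    [IsOrderedAddMonoid F] [Module 𝕜 F] [PosSMulMono 𝕜 F]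
    (f : E →ₗ[𝕜] F) {p q x : E} {c : F}
    (hp : f p = c) (hq : f q = c) (hx : f x ≠ c) : x ∉ segment 𝕜 p q :=
  fun hxpq => hx ((convex_hyperplane f.isLinear c).segment_subset hp hq hxpq)

theorem not_isExtreme_segment_of_add_add_eq {𝕜 E : Type*} [Field 𝕜] [LinearOrder 𝕜]
    [IsStrictOrderedRing 𝕜] [AddCommGroup E] [Module 𝕜 E] {C : Set E} {p q a₁ a₂ a₃ a₄ : E}
    (h₁ : a₁ ∈ C) (h₂ : a₂ ∈ C) (h₃ : a₃ ∈ C) (h₄ : a₄ ∈ C)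
    (hsum : a₁ + a₂ + (a₃ + a₄) = (2 : 𝕜) • (p + q)) (hout : midpoint 𝕜 a₁ a₂ ∉ segment 𝕜 p q) :
    ¬ IsExtreme 𝕜 (convexHull 𝕜 C) (segment 𝕜 p q) := by
  intro hext
  have hmid : midpoint 𝕜 (midpoint 𝕜 a₁ a₂) (midpoint 𝕜 a₃ a₄) = midpoint 𝕜 p q := by
    simp only [midpoint_eq_smul_add, ← smul_add, smul_smul, hsum]
    rw [invOf_mul_self, mul_one]
  refine hout (hext.left_mem_of_mem_openSegment
    (segment_subset_convexHull h₁ h₂ (midpoint_mem_segment a₁ a₂))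
    (segment_subset_convexHull h₃ h₄ (midpoint_mem_segment a₃ a₄))
    (midpoint_mem_segment p q) ?_)
  rw [← hmid]
  exact midpoint_mem_openSegment _ _

set_option maxRecDepth 10000 in
theorem isGraver_A_S6 : IsGraver !![1,2,3,4,5,6,7; 1,1,1,1,1,1,1] ![1,-1,1,-1,-1,0,1] :=
  isGraver_of_abs_le_one (by decide) (by decide) (by decide) (by decide)

theorem stmt_16 :
    let A : Matrix (Fin 2) (Fin 7) ℤ := !![1,2,3,4,5,6,7; 1,1,1,1,1,1,1]
    let g : Fin 7 → ℤ := ![1,-1,1,-1,-1,0,1]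
    let gp : Fin 7 → ℝ := ![1,0,1,0,0,0,1]
    let gm : Fin 7 → ℝ := ![0,1,0,1,1,0,0]
    IsGraver A g ∧
    ¬ IsExtreme ℝ
        (convexHull ℝ {x : Fin 7 → ℝ | ∃ w : Fin 7 → ℤ, (∀ i, 0 ≤ w i) ∧
          A.mulVec w = A.mulVec ![1,0,1,0,0,0,1] ∧ x = fun i => (w i : ℝ)})
        (segment ℝ gp gm) := by
  intro A g gp gm
  refine ⟨isGraver_A_S6, ?_⟩
  let a₁ : Fin 7 → ℤ := ![1,0,0,0,2,0,0]
  let a₂ : Fin 7 → ℤ := ![0,2,0,0,0,0,1]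
  let a₃ : Fin 7 → ℤ := ![0,0,1,2,0,0,0]
  let a₄ : Fin 7 → ℤ := ![1,0,1,0,0,0,1]
  refine not_isExtreme_segment_of_add_add_eq (a₁ := Int.cast ∘ a₁) (a₂ := Int.cast ∘ a₂)
    (a₃ := Int.cast ∘ a₃) (a₄ := Int.cast ∘ a₄) ⟨a₁, by decide, by decide, rfl⟩
    ⟨a₂, by decide, by decide, rfl⟩ ⟨a₃, by decide, by decide, rfl⟩
    ⟨a₄, by decide, by decide, rfl⟩ ?_ ?_
  · funext i
    fin_cases i <;> norm_num [a₁, a₂, a₃, a₄, gp, gm]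
  · -- `x₀ + x₁` is `1` on the segment but `3/2` at the midpoint of `a₁` and `a₂`
    refine notMem_segment_of_linearMap_eq
      (LinearMap.proj (R := ℝ) (φ := fun _ : Fin 7 => ℝ) 0 + LinearMap.proj 1) (c := 1)
      ?_ ?_ ?_ <;> norm_num [gp, gm, a₁, a₂, midpoint_eq_smul_add]
end
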